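/- Let m ≥ 1 and consider the graph on 2m vertices consisting of m disjoint edges {⟨2k−1, 2k⟩ : k = 1,…,m}, with MaxCut cost operator C_MC = Σ_{k=1}^m (I − Z_{2k−1}Z_{2k})/2 on the 2m-qubit Hilbert space and mixing operator B = Σ_{i=1}^{2m} X_i. Let U = e^{−iβ_p B}e^{−iγ_p C_MC}···e^{−iβ_1 B}e^{−iγ_1 C_MC} be a QAOA unitary of any depth p ≥ 1 with arbitrary real parameters. Then for every string w ∈ {−1,1}^{2m} with C_MC(w) ≥ m/2 (a good string, cutting at least half the edges), ⟨w| U† C_MC U |w⟩ ≤ C_MC(w). -/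

import Mathlib

/-!
STATEMENT 14: On the decoupled graph of `m` disjoint edges, the warm-start QAOA of any
depth cannot improve the MaxCut cost of any good string (one cutting at least half the
edges): `⟨w|U†C_MC U|w⟩ ≤ C_MC(w)`.
-/

open scoped Matrix

/-- The type of `n`-bit strings, identified with `{-1,1}ⁿ` via `sgn`. -/
abbrev Str (n : ℕ) := Fin n → Bool

/-- The `±1` value of a bit. -/
noncomputable def sgn (b : Bool) : ℝ := if b then 1 else -1

/-- Matrices on the `n`-qubit Hilbert space `ℂ^(2^n)`. -/
abbrev Mat (n : ℕ) := Matrix (Str n) (Str n) ℂ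

/-- The Pauli `Z` operator on qubit `i`. -/
noncomputable def PauliZ (n : ℕ) (i : Fin n) : Mat n :=
  Matrix.diagonal fun z => (sgn (z i) : ℂ)

/-- The Pauli `X` operator on qubit `i`. -/
noncomputable def PauliX (n : ℕ) (i : Fin n) : Mat n :=
  Matrix.of fun z z' => if z' = Function.update z i (!z i) then 1 else 0

/-- The mixing operator `B = Σᵢ Xᵢ`. -/
noncomputable def mixer (n : ℕ) : Mat n := ∑ i, PauliX n i

/-- Matrix exponential. -/
noncomputable def mexp {ι : Type*} [Fintype ι] [DecidableEq ι] (A : Matrix ι ι ℂ) : Matrix ι ι ℂ :=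
  NormedSpace.exp A

/-- The first endpoint `2k−1` (0-indexed: `2k`) of the `k`-th disjoint edge. -/
def v₁ (m : ℕ) (k : Fin m) : Fin (2 * m) := ⟨2 * (k : ℕ), by omega⟩

/-- The second endpoint `2k` (0-indexed: `2k+1`) of the `k`-th disjoint edge. -/
def v₂ (m : ℕ) (k : Fin m) : Fin (2 * m) := ⟨2 * (k : ℕ) + 1, by omega⟩

/-- The MaxCut cost operator `C_MC = Σ_k (I − Z_{2k−1} Z_{2k})/2` of the graph
consisting of `m` disjoint edges on `2m` vertices. -/
noncomputable def CMCop (m : ℕ) : Mat (2 * m) :=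
  ∑ k : Fin m, (2 : ℂ)⁻¹ • ((1 : Mat (2 * m)) - PauliZ (2 * m) (v₁ m k) * PauliZ (2 * m) (v₂ m k))

/-- The classical MaxCut value `C_MC(w) = Σ_k (1 − w_{2k−1} w_{2k})/2`. -/
noncomputable def CMCval (m : ℕ) (w : Str (2 * m)) : ℝ :=
  ∑ k : Fin m, (1 - sgn (w (v₁ m k)) * sgn (w (v₂ m k))) / 2

/-- The depth-`p` QAOA unitary
`U = e^{−iβ_p B} e^{−iγ_p C_MC} ⋯ e^{−iβ_1 B} e^{−iγ_1 C_MC}`. -/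
noncomputable def qaoaU (m : ℕ) (p : ℕ) (γ β : Fin p → ℝ) : Mat (2 * m) :=
  (List.ofFn fun k : Fin p =>
    mexp ((-(Complex.I * (β k.rev))) • mixer (2 * m)) *
    mexp ((-(Complex.I * (γ k.rev))) • CMCop m)).prod

/-!
The cost and the mixer are sums of commuting one-edge terms, so the QAOA unitary is the tensor
power `E^{⊗m}` of the one-edge QAOA unitary `E`, and `⟨w|U†CU|w⟩ = Σₖ g(wₖ)` where `wₖ` is the
pair of bits of edge `k` and `g(y) = ⟨y|E†CE|y⟩` is the one-edge value. Flipping all bits fixes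
`B` and `C`, hence `E`, so `g` takes one value `a` on the two cut strings and one value `b` on the
two uncut ones; `tr(E†CE) = tr C = 2` gives `a + b = 1`, and `b ≥ 0` because `E†CE ⪰ 0`. Hence
`⟨w|U†CU|w⟩ = C(w) + b (m − 2 C(w))`, which is at most `C(w)` as soon as `C(w) ≥ m/2`.
-/

open Matrix NormedSpace

section PiKronecker

variable {ι κ R : Type*} [CommSemiring R] [Fintype ι]

def piKronecker (A : ι → Matrix κ κ R) : Matrix (ι → κ) (ι → κ) R :=
  of fun g g' => ∏ i, A i (g i) (g' i)

lemma piKronecker_apply (A : ι → Matrix κ κ R) (g g' : ι → κ) :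
    piKronecker A g g' = ∏ i, A i (g i) (g' i) := rfl

lemma conjTranspose_piKronecker [StarRing R] (A : ι → Matrix κ κ R) :
    (piKronecker A)ᴴ = piKronecker fun i => (A i)ᴴ := by
  ext g g'
  simp [piKronecker_apply, conjTranspose_apply, star_prod]

lemma piKronecker_one [DecidableEq κ] : piKronecker (1 : ι → Matrix κ κ R) = 1 := by
  ext g g'
  simp [piKronecker_apply, one_apply, Fintype.prod_boole, funext_iff]

lemma piKronecker_mulSingle_apply [DecidableEq ι] [DecidableEq κ] (i : ι) (A : Matrix κ κ R)
    (g g' : ι → κ) :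
    piKronecker (Pi.mulSingle i A) g g' = if ∀ j ≠ i, g j = g' j then A (g i) (g' i) else 0 := by
  rw [piKronecker_apply, ← Finset.mul_prod_erase _ _ (Finset.mem_univ i)]
  have hrest :
      ∏ j ∈ Finset.univ.erase i, Pi.mulSingle (M := fun _ => Matrix κ κ R) i A j (g j) (g' j)
        = ∏ j ∈ Finset.univ.erase i, if g j = g' j then 1 else 0 :=
    Finset.prod_congr rfl fun j hj => by
      rw [Pi.mulSingle_eq_of_ne (Finset.ne_of_mem_erase hj), one_apply]
  rw [hrest, Finset.prod_boole, Pi.mulSingle_eq_same]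
  simp only [Finset.mem_erase, Finset.mem_univ, and_true, mul_ite, mul_one, mul_zero]

variable [DecidableEq ι] [Fintype κ]

lemma piKronecker_mul (A B : ι → Matrix κ κ R) :
    piKronecker A * piKronecker B = piKronecker (A * B) := by
  ext g g'
  simp only [mul_apply, piKronecker_apply, Pi.mul_apply, Fintype.prod_sum, Finset.prod_mul_distrib]

variable [DecidableEq κ]

variable (ι) in
def tensorPower : Matrix κ κ R →* Matrix (ι → κ) (ι → κ) R where
  toFun A := piKronecker fun _ => A
  map_one' := piKronecker_one
  map_mul' _ _ := (piKronecker_mul _ _).symm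

def atSite (i : ι) : Matrix κ κ R →ₐ[R] Matrix (ι → κ) (ι → κ) R :=
  AlgHom.ofLinearMap
    { toFun A := piKronecker (Pi.mulSingle i A)
      map_add' A B := by
        change piKronecker _ = piKronecker _ + piKronecker _
        ext g g'
        simp only [Matrix.add_apply, piKronecker_mulSingle_apply]
        split_ifs <;> simp
      map_smul' c A := by
        change piKronecker _ = c • piKronecker _
        ext g g'
        simp only [Matrix.smul_apply, piKronecker_mulSingle_apply]
        split_ifs <;> simp }
    (by
      change piKronecker _ = 1
      rw [Pi.mulSingle_one, piKronecker_one])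
    (fun A B => by
      change piKronecker _ = piKronecker _ * piKronecker _
      rw [piKronecker_mul, Pi.mulSingle_mul])

lemma atSite_apply (i : ι) (A : Matrix κ κ R) (g g' : ι → κ) :
    atSite i A g g' = if ∀ j ≠ i, g j = g' j then A (g i) (g' i) else 0 :=
  piKronecker_mulSingle_apply i A g g'

lemma atSite_apply_self (i : ι) (A : Matrix κ κ R) (g : ι → κ) :
    atSite i A g g = A (g i) (g i) := by
  simp [atSite_apply]

lemma atSite_commute {i j : ι} (h : i ≠ j) (A B : Matrix κ κ R) :
    Commute (atSite i A) (atSite j B) := by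
  change piKronecker _ * piKronecker _ = piKronecker _ * piKronecker _
  rw [piKronecker_mul, piKronecker_mul,
    (Pi.mulSingle_commute (f := fun _ : ι => Matrix κ κ R) h A B).eq]

lemma atSite_diagonal (i : ι) (d : κ → R) :
    atSite i (diagonal d) = diagonal fun g => d (g i) := by
  ext g g'
  rw [atSite_apply, diagonal_apply, diagonal_apply]
  by_cases h : g = g'
  · simp [h]
  · have : ¬ ((∀ j ≠ i, g j = g' j) ∧ g i = g' i) := fun ⟨hj, hi⟩ =>
      h (funext fun j => if hji : j = i then hji ▸ hi else hj j hji)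
    rw [if_neg h]
    split_ifs with h₁ h₂
    exacts [absurd ⟨h₁, h₂⟩ this, rfl, rfl]

lemma piKronecker_mul_atSite_mul {A B : Matrix κ κ R} (h : A * B = 1) (i : ι) (C : Matrix κ κ R) :
    piKronecker (fun _ => A) * atSite i C * piKronecker (fun _ => B) = atSite i (A * C * B) := by
  change piKronecker _ * piKronecker _ * piKronecker _ = piKronecker _
  rw [piKronecker_mul, piKronecker_mul]
  congr 1
  funext j
  by_cases hj : j = i
  · subst hj; simp
  · simp [Pi.mulSingle_eq_of_ne hj, h]

end PiKronecker

section Exponential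

variable {n n' : Type*} [Fintype n] [DecidableEq n] [Fintype n'] [DecidableEq n']

lemma map_exp_matrix {F : Type*} [FunLike F (Matrix n n ℂ) (Matrix n' n' ℂ)]
    [AlgHomClass F ℂ (Matrix n n ℂ) (Matrix n' n' ℂ)] (φ : F) (A : Matrix n n ℂ) :
    φ (exp A) = exp (φ A) :=
  open scoped Norms.Operator in
  map_exp φ (LinearMap.continuous_of_finiteDimensional (AlgHomClass.toAlgHom φ).toLinearMap) A

lemma exp_mem_unitary_of_conjTranspose_eq_neg {A : Matrix n n ℂ} (h : Aᴴ = -A) :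
    exp A ∈ unitary (Matrix n n ℂ) := by
  have hstar : star (exp A) = exp (-A) := by
    rw [star_eq_conjTranspose, ← exp_conjTranspose, h]
  rw [Unitary.mem_iff, hstar, ← Matrix.exp_add_of_commute _ _ (Commute.refl A).neg_left,
    ← Matrix.exp_add_of_commute _ _ (Commute.refl A).neg_right, neg_add_cancel, add_neg_cancel,
    exp_zero, and_self]

lemma exp_neg_I_mul_smul_mem_unitary {H : Matrix n n ℂ} (hH : H.IsHermitian) (t : ℝ) :
    exp ((-(Complex.I * t)) • H) ∈ unitary (Matrix n n ℂ) := by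
  refine exp_mem_unitary_of_conjTranspose_eq_neg ?_
  rw [conjTranspose_smul, hH.eq, ← neg_smul]
  congr 1
  simp [Complex.conj_ofReal]

variable {ι κ : Type*} [Fintype ι] [DecidableEq ι] [Fintype κ] [DecidableEq κ]

lemma exp_sum_atSite (A : Matrix κ κ ℂ) :
    exp (∑ i : ι, atSite i A) = piKronecker fun _ => exp A := by
  suffices ∀ s : Finset ι,
      exp (∑ i ∈ s, atSite i A) = piKronecker (s.piecewise (fun _ => exp A) 1) by
    simpa using this Finset.univ
  intro s
  induction s using Finset.induction_on with
  | empty => simp [piKronecker_one]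
  | insert a s ha ih =>
    have hcomm : Commute (atSite a A) (∑ i ∈ s, atSite i A) :=
      Commute.sum_right _ _ _ fun i hi => atSite_commute (ne_of_mem_of_not_mem hi ha).symm _ _
    rw [Finset.sum_insert ha, Matrix.exp_add_of_commute _ _ hcomm, ih, ← map_exp_matrix]
    change piKronecker _ * piKronecker _ = piKronecker _
    rw [piKronecker_mul]
    congr 1
    funext j
    by_cases hj : j = a
    · subst hj; simp [ha]
    · simp [hj, Finset.piecewise_insert_of_ne]

end Exponential

section QAOA

variable {n : Type*} [Fintype n] [DecidableEq n] {p : ℕ}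

noncomputable def qaoaUnitary (B C : Matrix n n ℂ) (γ β : Fin p → ℝ) : Matrix n n ℂ :=
  (List.ofFn fun k : Fin p =>
    exp ((-(Complex.I * (β k.rev))) • B) * exp ((-(Complex.I * (γ k.rev))) • C)).prod

lemma qaoaU_eq_qaoaUnitary (m : ℕ) (γ β : Fin p → ℝ) :
    qaoaU m p γ β = qaoaUnitary (mixer (2 * m)) (CMCop m) γ β := rfl

lemma map_qaoaUnitary {n' F : Type*} [Fintype n'] [DecidableEq n']
    [FunLike F (Matrix n n ℂ) (Matrix n' n' ℂ)] [AlgHomClass F ℂ (Matrix n n ℂ) (Matrix n' n' ℂ)]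
    (φ : F) (B C : Matrix n n ℂ) (γ β : Fin p → ℝ) :
    φ (qaoaUnitary B C γ β) = qaoaUnitary (φ B) (φ C) γ β := by
  simp only [qaoaUnitary, map_list_prod, List.map_ofFn, Function.comp_def, map_mul,
    map_exp_matrix, map_smul]

lemma qaoaUnitary_mem_unitary {B C : Matrix n n ℂ} (hB : B.IsHermitian) (hC : C.IsHermitian)
    (γ β : Fin p → ℝ) : qaoaUnitary B C γ β ∈ unitary (Matrix n n ℂ) :=
  Submonoid.list_prod_mem _ <| by
    simpa [List.mem_ofFn] using fun k => mul_mem (exp_neg_I_mul_smul_mem_unitary hB _)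
      (exp_neg_I_mul_smul_mem_unitary hC _)

lemma qaoaUnitary_sum_atSite {ι : Type*} [Fintype ι] [DecidableEq ι] (B C : Matrix n n ℂ)
    (γ β : Fin p → ℝ) :
    qaoaUnitary (∑ i : ι, atSite i B) (∑ i : ι, atSite i C) γ β
      = piKronecker fun _ => qaoaUnitary B C γ β := by
  change _ = tensorPower ι _
  simp only [qaoaUnitary, map_list_prod, List.map_ofFn, Function.comp_def, map_mul,
    Finset.smul_sum, ← map_smul, exp_sum_atSite]
  rfl

end QAOA

section Flip

lemma sgn_not (b : Bool) : sgn (!b) = -sgn b := by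
  cases b <;> simp [sgn]

def flipBits (n : ℕ) : Str n ≃ Str n := Equiv.piCongrRight fun _ => Equiv.boolNot

lemma flipBits_symm (n : ℕ) : (flipBits n).symm = flipBits n := rfl

lemma flipBits_apply {n : ℕ} (z : Str n) (i : Fin n) : flipBits n z i = !z i := rfl

lemma reindex_flipBits_PauliX (n : ℕ) (i : Fin n) :
    reindex (flipBits n) (flipBits n) (PauliX n i) = PauliX n i := by
  ext z z'
  simp only [reindex_apply, submatrix_apply, PauliX, of_apply]
  congr 1
  simp [flipBits, funext_iff, Function.update_apply, apply_ite]

lemma reindex_flipBits_mixer (n : ℕ) :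
    reindex (flipBits n) (flipBits n) (mixer n) = mixer n := by
  rw [mixer, ← coe_reindexAlgEquiv ℂ ℂ, map_sum]
  simp only [coe_reindexAlgEquiv, reindex_flipBits_PauliX]

lemma CMCval_flipBits (m : ℕ) (z : Str (2 * m)) : CMCval m (flipBits _ z) = CMCval m z := by
  simp [CMCval, flipBits_apply, sgn_not]

lemma CMCop_eq_diagonal (m : ℕ) : CMCop m = diagonal fun z => (CMCval m z : ℂ) := by
  ext z z'
  simp only [CMCop, PauliZ, CMCval, diagonal_mul_diagonal, Matrix.sum_apply, diagonal_apply]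
  split_ifs with h
  · simp [h, div_eq_inv_mul]
  · simp [h]

lemma reindex_flipBits_CMCop (m : ℕ) :
    reindex (flipBits (2 * m)) (flipBits (2 * m)) (CMCop m) = CMCop m := by
  rw [CMCop_eq_diagonal, reindex_apply, submatrix_diagonal_equiv, flipBits_symm]
  simp only [Function.comp_def, CMCval_flipBits]

lemma PauliX_isHermitian (n : ℕ) (i : Fin n) : (PauliX n i).IsHermitian := by
  ext z z'
  simp only [conjTranspose_apply, PauliX, of_apply, apply_ite star, star_one, star_zero]
  congr 1
  apply propext
  constructor <;> rintro rfl <;> simp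

lemma mixer_isHermitian (n : ℕ) : (mixer n).IsHermitian :=
  isSelfAdjoint_sum _ fun i _ => PauliX_isHermitian n i

lemma CMCval_nonneg (m : ℕ) (z : Str (2 * m)) : 0 ≤ CMCval m z :=
  Finset.sum_nonneg fun k _ => by cases z (v₁ m k) <;> cases z (v₂ m k) <;> norm_num [sgn]

open scoped ComplexOrder in
lemma CMCop_posSemidef (m : ℕ) : (CMCop m).PosSemidef := by
  rw [CMCop_eq_diagonal, posSemidef_diagonal_iff]
  exact fun z => by exact_mod_cast CMCval_nonneg m z

lemma reindex_flipBits_qaoaU (m p : ℕ) (γ β : Fin p → ℝ) :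
    reindex (flipBits (2 * m)) (flipBits (2 * m)) (qaoaU m p γ β) = qaoaU m p γ β := by
  rw [qaoaU_eq_qaoaUnitary, ← coe_reindexAlgEquiv ℂ ℂ, map_qaoaUnitary, coe_reindexAlgEquiv,
    reindex_flipBits_mixer, reindex_flipBits_CMCop]

end Flip

section Edges

/- Qubits `2k` and `2k + 1` form edge `k`. The register of one edge is `Str (2 * 1)`, so that
`CMCop 1` and `qaoaU 1` are the one-edge cost and QAOA unitary. -/
def edgeEquiv (m : ℕ) : Fin m × Fin (2 * 1) ≃ Fin (2 * m) :=
  finProdFinEquiv.trans (finCongr (by ring))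

lemma edgeEquiv_v₁ {m : ℕ} (k : Fin m) : edgeEquiv m (k, v₁ 1 0) = v₁ m k :=
  Fin.ext (by simp [edgeEquiv, v₁])

lemma edgeEquiv_v₂ {m : ℕ} (k : Fin m) : edgeEquiv m (k, v₂ 1 0) = v₂ m k :=
  Fin.ext (by simp [edgeEquiv, v₂]; ring)

def splitEdges (m : ℕ) : Str (2 * m) ≃ (Fin m → Str (2 * 1)) :=
  ((edgeEquiv m).arrowCongr (Equiv.refl Bool)).symm.trans (Equiv.curry _ _ _)

lemma splitEdges_apply {m : ℕ} (z : Str (2 * m)) (k : Fin m) (i : Fin (2 * 1)) :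
    splitEdges m z k i = z (edgeEquiv m (k, i)) := rfl

lemma splitEdges_symm_apply_edgeEquiv {m : ℕ} (g : Fin m → Str (2 * 1)) (k : Fin m)
    (i : Fin (2 * 1)) :
    (splitEdges m).symm g (edgeEquiv m (k, i)) = g k i := by
  rw [← splitEdges_apply ((splitEdges m).symm g), Equiv.apply_symm_apply]

lemma splitEdges_update {m : ℕ} (z : Str (2 * m)) (k : Fin m) (i : Fin (2 * 1)) (b : Bool) :
    splitEdges m (Function.update z (edgeEquiv m (k, i)) b)
      = Function.update (splitEdges m z) k (Function.update (splitEdges m z k) i b) := by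
  funext k' i'
  by_cases hk : k' = k
  · subst hk
    by_cases hi : i' = i
    · subst hi; simp [splitEdges_apply]
    · simp [splitEdges_apply, hi]
  · simp [splitEdges_apply, hk]

lemma CMCval_eq_sum_splitEdges {m : ℕ} (z : Str (2 * m)) :
    CMCval m z = ∑ k, CMCval 1 (splitEdges m z k) := by
  simp only [CMCval, Fin.sum_univ_one, splitEdges_apply, edgeEquiv_v₁, edgeEquiv_v₂]

noncomputable def toEdges (m : ℕ) :
    Mat (2 * m) ≃ₐ[ℂ] Matrix (Fin m → Str (2 * 1)) (Fin m → Str (2 * 1)) ℂ :=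
  reindexAlgEquiv ℂ ℂ (splitEdges m)

lemma toEdges_apply {m : ℕ} (A : Mat (2 * m)) (g g' : Fin m → Str (2 * 1)) :
    toEdges m A g g' = A ((splitEdges m).symm g) ((splitEdges m).symm g') := rfl

lemma toEdges_conjTranspose {m : ℕ} (A : Mat (2 * m)) : toEdges m Aᴴ = (toEdges m A)ᴴ :=
  (conjTranspose_reindex _ _ A).symm

lemma toEdges_PauliX {m : ℕ} (k : Fin m) (i : Fin (2 * 1)) :
    toEdges m (PauliX (2 * m) (edgeEquiv m (k, i))) = atSite k (PauliX (2 * 1) i) := by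
  ext g g'
  have key : (splitEdges m).symm g' = Function.update ((splitEdges m).symm g) (edgeEquiv m (k, i))
        (!(splitEdges m).symm g (edgeEquiv m (k, i)))
      ↔ (∀ j ≠ k, g j = g' j) ∧ g' k = Function.update (g k) i (!g k i) := by
    rw [Equiv.symm_apply_eq, splitEdges_update, Equiv.apply_symm_apply,
      splitEdges_symm_apply_edgeEquiv, Function.eq_update_iff, and_comm]
    exact and_congr (forall₂_congr fun _ _ => eq_comm) Iff.rfl
  simp only [toEdges_apply, atSite_apply, PauliX, of_apply]
  rw [if_congr key rfl rfl, ite_and]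
  congr

lemma toEdges_mixer (m : ℕ) : toEdges m (mixer (2 * m)) = ∑ k, atSite k (mixer (2 * 1)) := by
  rw [mixer, map_sum, ← (edgeEquiv m).sum_comp, Fintype.sum_prod_type]
  simp only [toEdges_PauliX, mixer, map_sum]

lemma toEdges_CMCop (m : ℕ) : toEdges m (CMCop m) = ∑ k, atSite k (CMCop 1) := by
  simp only [CMCop_eq_diagonal, atSite_diagonal]
  ext g g'
  simp only [toEdges_apply, Matrix.sum_apply, diagonal_apply, EmbeddingLike.apply_eq_iff_eq]
  split_ifs with h
  · rw [CMCval_eq_sum_splitEdges ((splitEdges m).symm g), Equiv.apply_symm_apply]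
    push_cast
    rfl
  · simp

lemma toEdges_qaoaU (m p : ℕ) (γ β : Fin p → ℝ) :
    toEdges m (qaoaU m p γ β) = piKronecker fun _ => qaoaU 1 p γ β := by
  rw [qaoaU_eq_qaoaUnitary, map_qaoaUnitary, toEdges_mixer, toEdges_CMCop, qaoaUnitary_sum_atSite]
  rfl

end Edges

section EvolvedCost

open scoped ComplexOrder

noncomputable def evolvedCost (m p : ℕ) (γ β : Fin p → ℝ) : Mat (2 * m) :=
  (qaoaU m p γ β)ᴴ * CMCop m * qaoaU m p γ β

lemma qaoaU_mem_unitary (m p : ℕ) (γ β : Fin p → ℝ) : qaoaU m p γ β ∈ unitary (Mat (2 * m)) :=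
  qaoaUnitary_mem_unitary (mixer_isHermitian _) (CMCop_posSemidef m).isHermitian γ β

lemma evolvedCost_apply_self (m p : ℕ) (γ β : Fin p → ℝ) (w : Str (2 * m)) :
    evolvedCost m p γ β w w
      = ∑ k, evolvedCost 1 p γ β (splitEdges m w k) (splitEdges m w k) := by
  have hunit : (qaoaU 1 p γ β)ᴴ * qaoaU 1 p γ β = 1 :=
    Unitary.star_mul_self_of_mem (qaoaU_mem_unitary 1 p γ β)
  have hsplit : toEdges m (evolvedCost m p γ β) = ∑ k, atSite k (evolvedCost 1 p γ β) := by
    rw [evolvedCost, map_mul, map_mul, toEdges_conjTranspose, toEdges_qaoaU, toEdges_CMCop,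
      conjTranspose_piKronecker, Finset.mul_sum, Finset.sum_mul]
    exact Finset.sum_congr rfl fun k _ => piKronecker_mul_atSite_mul hunit k _
  have := congrFun (congrFun hsplit (splitEdges m w)) (splitEdges m w)
  simpa [toEdges_apply, Matrix.sum_apply, atSite_apply_self] using this

lemma evolvedCost_posSemidef (m p : ℕ) (γ β : Fin p → ℝ) : (evolvedCost m p γ β).PosSemidef :=
  (CMCop_posSemidef m).conjTranspose_mul_mul_same _

lemma reindex_flipBits_evolvedCost (m p : ℕ) (γ β : Fin p → ℝ) :
    reindex (flipBits (2 * m)) (flipBits (2 * m)) (evolvedCost m p γ β) = evolvedCost m p γ β := by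
  rw [evolvedCost, ← coe_reindexAlgEquiv ℂ ℂ, map_mul, map_mul, coe_reindexAlgEquiv,
    ← conjTranspose_reindex, reindex_flipBits_qaoaU, reindex_flipBits_CMCop]

lemma trace_evolvedCost (m p : ℕ) (γ β : Fin p → ℝ) :
    trace (evolvedCost m p γ β) = trace (CMCop m) := by
  rw [evolvedCost, trace_mul_cycle, ← star_eq_conjTranspose,
    Unitary.mul_star_self_of_mem (qaoaU_mem_unitary m p γ β), one_mul]

end EvolvedCost

lemma eq_CMCval_add_of_flipBits_invariant {g : Str (2 * 1) → ℝ}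
    (hflip : ∀ y, g (flipBits _ y) = g y) (hsum : ∑ y, g y = ∑ y, CMCval 1 y) (y : Str (2 * 1)) :
    g y = CMCval 1 y + g (fun _ => false) * (1 - 2 * CMCval 1 y) := by
  -- the uncut strings are `u` and its flip, the cut ones `c` and its flip
  set u : Str (2 * 1) := fun _ => false
  set c : Str (2 * 1) := Function.update u (v₂ 1 0) true
  have huniv : (Finset.univ : Finset (Str (2 * 1))) = {u, flipBits _ u, c, flipBits _ c} := by
    decide
  have hu : CMCval 1 u = 0 := by simp [u, CMCval, sgn]
  have hc : CMCval 1 c = 1 := by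
    have h₁ : c (v₁ 1 0) = false := by decide
    have h₂ : c (v₂ 1 0) = true := by decide
    norm_num [CMCval, h₁, h₂, sgn]
  rw [huniv, Finset.sum_insert (by decide), Finset.sum_insert (by decide),
    Finset.sum_pair (by decide), Finset.sum_insert (by decide), Finset.sum_insert (by decide),
    Finset.sum_pair (by decide), hflip, hflip, CMCval_flipBits, CMCval_flipBits, hu, hc] at hsum
  have hy : y = u ∨ y = flipBits _ u ∨ y = c ∨ y = flipBits _ c := by
    have := Finset.mem_univ y
    rw [huniv] at this
    simpa using this
  rcases hy with rfl | rfl | rfl | rfl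
  all_goals simp only [hflip, CMCval_flipBits, hu, hc]; linarith

lemma re_evolvedCost_one_apply_self (p : ℕ) (γ β : Fin p → ℝ) (y : Str (2 * 1)) :
    (evolvedCost 1 p γ β y y).re
      = CMCval 1 y + (evolvedCost 1 p γ β (fun _ => false) (fun _ => false)).re
        * (1 - 2 * CMCval 1 y) := by
  refine eq_CMCval_add_of_flipBits_invariant (g := fun y => (evolvedCost 1 p γ β y y).re)
    (fun y => ?_) ?_ y
  · have := congrFun (congrFun (reindex_flipBits_evolvedCost 1 p γ β) y) y
    rw [reindex_apply, submatrix_apply, flipBits_symm] at this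
    simp only [this]
  · have := congrArg Complex.re (trace_evolvedCost 1 p γ β)
    simpa [trace, CMCop_eq_diagonal] using this

lemma re_evolvedCost_apply_self (m p : ℕ) (γ β : Fin p → ℝ) (w : Str (2 * m)) :
    (evolvedCost m p γ β w w).re
      = CMCval m w + (evolvedCost 1 p γ β (fun _ => false) (fun _ => false)).re
        * (m - 2 * CMCval m w) := by
  rw [evolvedCost_apply_self, Complex.re_sum,
    Finset.sum_congr rfl fun k _ => re_evolvedCost_one_apply_self p γ β _,
    Finset.sum_add_distrib, ← Finset.mul_sum, Finset.sum_sub_distrib, ← Finset.mul_sum,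
    ← CMCval_eq_sum_splitEdges]
  simp

theorem stmt14_general (m : ℕ) (p : ℕ) (γ β : Fin p → ℝ)
    (w : Str (2 * m)) (hw : (m : ℝ) / 2 ≤ CMCval m w) :
    (((qaoaU m p γ β)ᴴ * CMCop m * qaoaU m p γ β) w w).re ≤ CMCval m w := by
  have hb : 0 ≤ (evolvedCost 1 p γ β (fun _ => false) (fun _ => false)).re := by
    open scoped ComplexOrder in
    simpa using (Complex.le_def.1 (evolvedCost_posSemidef 1 p γ β).diag_nonneg).1
  change (evolvedCost m p γ β w w).re ≤ _
  rw [re_evolvedCost_apply_self]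
  nlinarith

theorem stmt14 (m : ℕ) (hm : 1 ≤ m) (p : ℕ) (hp : 1 ≤ p) (γ β : Fin p → ℝ)
    (w : Str (2 * m)) (hw : (m : ℝ) / 2 ≤ CMCval m w) :
    (((qaoaU m p γ β)ᴴ * CMCop m * qaoaU m p γ β) w w).re ≤ CMCval m w :=
  stmt14_general m p γ β w hw
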